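/- arXiv:1903.03100 — 2 statements merged into one kernel-verified Lean document; each statement's English description precedes it below -/
import Mathlib

section
/- Let q ≥ 2, let R be a commutative ring, and consider the group algebra R[S_q] of the permutation group of {1, …, q}, with multiplication induced by composition of permutations (σ · τ = σ ∘ τ). Then: Σ_{σ ∈ S_q} sgn(σ) · σ = ( Σ_{σ ∈ S_q, σ(q) = q} sgn(σ) · σ ) · ( 1 − Σ_{r=1}^{q−1} (r q) ), where (r q) denotes the transposition of r and q and sgn the sign character. -/
/-!
Every permutation `σ` factors uniquely as `τ * swap r a` with `τ a = a` (namely `r = σ⁻¹ a`,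
and `swap a a = 1`). As `σ ↦ sgn σ • σ` is multiplicative, the signed sum over all of `S_q` is the
signed sum over the stabiliser of `a` times `∑ r, sgn (swap r a) • swap r a`, and the latter is
`1 - ∑_{r ≠ a} swap r a`.
-/

open MonoidAlgebra Equiv

namespace Equiv.Perm

variable {α : Type*} [DecidableEq α]

def stabilizerProdEquiv (a : α) : {τ : Perm α // τ a = a} × α ≃ Perm α where
  toFun p := p.1 * swap p.2 a
  invFun σ := (⟨σ * swap (σ⁻¹ a) a, by simp⟩, σ⁻¹ a)
  left_inv := by
    rintro ⟨⟨τ, hτ⟩, r⟩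
    have hτ' : τ.symm a = a := τ.symm_apply_eq.mpr hτ.symm
    ext1
    · ext1; simp [mul_assoc, hτ']
    · simp [hτ']
  right_inv σ := by simp [mul_assoc]

end Equiv.Perm

section Antisymmetrizer

variable {α : Type*} [Fintype α] [DecidableEq α] {R : Type*} [Ring R]

theorem sign_smul_of_mul (σ τ : Perm α) :
    (Perm.sign (σ * τ) : ℤ) • of R (Perm α) (σ * τ)
      = ((Perm.sign σ : ℤ) • of R (Perm α) σ) * ((Perm.sign τ : ℤ) • of R (Perm α) τ) := by
  rw [map_mul, map_mul, Units.val_mul, smul_mul_smul_comm]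

theorem sum_sign_smul_of_swap (a : α) :
    ∑ r, (Perm.sign (swap r a) : ℤ) • of R (Perm α) (swap r a)
      = 1 - ∑ r ∈ Finset.univ.filter (· ≠ a), of R (Perm α) (swap r a) := by
  rw [Finset.filter_ne', ← Finset.add_sum_erase _ _ (Finset.mem_univ a), sub_eq_add_neg,
    ← Finset.sum_neg_distrib]
  congr 1
  · rw [swap_self, ← Perm.one_def, map_one, map_one, Units.val_one, one_smul]
  · refine Finset.sum_congr rfl fun r hr => ?_
    rw [Perm.sign_swap (Finset.ne_of_mem_erase hr)]
    simp

theorem sum_sign_smul_of_eq_sum_stabilizer_mul (a : α) :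
    ∑ σ : Perm α, (Perm.sign σ : ℤ) • of R (Perm α) σ
      = (∑ τ ∈ Finset.univ.filter (fun τ : Perm α => τ a = a),
          (Perm.sign τ : ℤ) • of R (Perm α) τ)
        * (1 - ∑ r ∈ Finset.univ.filter (· ≠ a), of R (Perm α) (swap r a)) :=
  calc ∑ σ : Perm α, (Perm.sign σ : ℤ) • of R (Perm α) σ
      = ∑ p : {τ : Perm α // τ a = a} × α, (Perm.sign (p.1.1 * swap p.2 a) : ℤ)
          • of R (Perm α) (p.1.1 * swap p.2 a) :=
        ((Perm.stabilizerProdEquiv a).sum_comp _).symm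
    _ = ∑ τ : {τ : Perm α // τ a = a}, ∑ r, ((Perm.sign τ.1 : ℤ) • of R (Perm α) τ.1)
          * ((Perm.sign (swap r a) : ℤ) • of R (Perm α) (swap r a)) := by
        simp only [Fintype.sum_prod_type, sign_smul_of_mul]
    _ = _ := by
        rw [← sum_sign_smul_of_swap, Finset.sum_mul_sum,
          Finset.sum_subtype _ (p := fun τ : Perm α => τ a = a) (fun τ => by simp)]

end Antisymmetrizer

/-- `{1, …, q}` is realised as `Fin q`, the point `q` being `⟨q - 1, _⟩`. -/
theorem statement6 (q : ℕ) (hq : 2 ≤ q) (R : Type*) [CommRing R] :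
    ∑ σ : Equiv.Perm (Fin q), (Equiv.Perm.sign σ : ℤ) • of R (Equiv.Perm (Fin q)) σ
    = (∑ σ ∈ Finset.univ.filter
          (fun σ : Equiv.Perm (Fin q) => σ ⟨q - 1, by omega⟩ = ⟨q - 1, by omega⟩),
        (Equiv.Perm.sign σ : ℤ) • of R (Equiv.Perm (Fin q)) σ)
      * (1 - ∑ r ∈ Finset.univ.filter (fun r : Fin q => r ≠ ⟨q - 1, by omega⟩),
          of R (Equiv.Perm (Fin q)) (Equiv.swap r ⟨q - 1, by omega⟩)) :=
  sum_sign_smul_of_eq_sum_stabilizer_mul _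
end

section
/- Let N ≥ 1 and let e_1, …, e_N be the standard basis of ℝ^N. For integers i, j ≥ 0, let L : ⋀^i ℝ^N ⊗ ⋀^j ℝ^N → ⋀^{i+1} ℝ^N ⊗ ⋀^{j+1} ℝ^N be the unique linear map satisfying L(v ⊗ w) = Σ_{r=1}^{N} (v ∧ e_r) ⊗ (w ∧ e_r) for all v ∈ ⋀^i ℝ^N, w ∈ ⋀^j ℝ^N. Then for every integer m ≥ 0, the m-fold composite L^m : ⋀^i ℝ^N ⊗ ⋀^j ℝ^N → ⋀^{i+m} ℝ^N ⊗ ⋀^{j+m} ℝ^N is injective whenever i + j ≤ N − 2m. -/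
open scoped TensorProduct

/-- Right wedge multiplication by a fixed vector `x`, as a linear map
`⋀^i ℝ^N → ⋀^{i+1} ℝ^N`, `v ↦ v ∧ x`. -/
noncomputable def wedgeRight (N i : ℕ) (x : Fin N → ℝ) :
    (⋀[ℝ]^i (Fin N → ℝ)) →ₗ[ℝ] ⋀[ℝ]^(i + 1) (Fin N → ℝ) where
  toFun v := ⟨(v : ExteriorAlgebra ℝ (Fin N → ℝ)) * ExteriorAlgebra.ι ℝ x, by
    have h := Submodule.mul_mem_mul v.2
      (LinearMap.mem_range_self (ExteriorAlgebra.ι ℝ (M := Fin N → ℝ)) x)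
    rwa [← pow_succ] at h⟩
  map_add' v w := by
    ext
    simp [add_mul]
  map_smul' c v := by
    ext
    simp [smul_mul_assoc]

/-- The bigraded piece `⋀^i ℝ^N ⊗ ⋀^j ℝ^N` of `⋀ ℝ^N ⊗ ⋀ ℝ^N`. -/
abbrev extTensor (N i j : ℕ) : Type :=
  (⋀[ℝ]^i (Fin N → ℝ)) ⊗[ℝ] (⋀[ℝ]^j (Fin N → ℝ))

/-- The `m`-fold composite `L^m : ⋀^i ⊗ ⋀^j → ⋀^{i+m} ⊗ ⋀^{j+m}` of a family of
operators `L` of bidegree `(1,1)`. -/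
noncomputable def lefschetzPow (N : ℕ)
    (L : ∀ i j : ℕ, extTensor N i j →ₗ[ℝ] extTensor N (i + 1) (j + 1)) :
    (m i j : ℕ) → (extTensor N i j →ₗ[ℝ] extTensor N (i + m) (j + m))
  | 0, _, _ => LinearMap.id
  | m + 1, i, j => (L (i + m) (j + m)).comp (lefschetzPow N L m i j)

/-!
This is the `sl₂` argument. Write `L = ∑ᵣ Rᵣ ⊗ Rᵣ`, with `Rᵣ` right multiplication by `eᵣ`, and
`Λ = ∑ₛ Cₛ ⊗ Cₛ`, with `Cₛ` right contraction by the dual basis vector `eₛ*`. Right contractions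
satisfy `Cₛ Rᵣ + Rᵣ Cₛ = δₛᵣ` with no Koszul sign, and `∑ᵣ Rᵣ Cᵣ` is multiplication by `p` on
`⋀^p`; hence `ΛL = LΛ + (N - p - q)` on `⋀^p ⊗ ⋀^q`. If `p + q < N` and `ΛL x + n x = 0`, then
`LΛ x = -(n + N - p - q) x`, so `Λ x ∈ ⋀^(p-1) ⊗ ⋀^(q-1)` satisfies a relation of the same kind;
by induction `Λ x = 0`, whence `x = 0`. Taking `n = 0`, `L` is injective on `⋀^p ⊗ ⋀^q` whenever
`p + q < N`, and `L^m` is a composite of such maps.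
-/

open TensorProduct CliffordAlgebra

namespace ExteriorAlgebra

section CommRing

variable {R M I : Type*} [CommRing R] [AddCommGroup M] [Module R M] [Fintype I]

theorem contractRight_eq_zero_of_mem_exteriorPower_zero {a : ExteriorAlgebra R M}
    (ha : a ∈ ⋀[R]^0 M) (d : Module.Dual R M) : contractRight a d = 0 := by
  obtain ⟨r, rfl⟩ := Submodule.mem_one.mp (by simpa using ha)
  exact contractRight_algebraMap _ _ _

theorem contractRight_mem_exteriorPower {n : ℕ} {a : ExteriorAlgebra R M}
    (ha : a ∈ ⋀[R]^n M) (d : Module.Dual R M) : contractRight a d ∈ ⋀[R]^(n - 1) M := by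
  induction ha using Submodule.pow_induction_on_right' with
  | algebraMap r => simp [contractRight_algebraMap]
  | add x y i _ _ hx hy => simpa using add_mem hx hy
  | mul_mem i x hx ih m hm =>
    obtain ⟨v, rfl⟩ := hm
    rw [contractRight_mul_ι]
    refine sub_mem (Submodule.smul_mem _ _ hx) ?_
    rcases i with _ | i
    · simp [contractRight_eq_zero_of_mem_exteriorPower_zero hx]
    · simpa [pow_succ] using Submodule.mul_mem_mul ih (LinearMap.mem_range_self (ι R) v)

variable (b : Module.Basis I R M)

noncomputable def eulerOperator : Module.End R (ExteriorAlgebra R M) :=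
  ∑ r, LinearMap.mulRight R (ι R (b r)) ∘ₗ (contractRight (Q := 0)).flip (b.coord r)

theorem eulerOperator_apply (x : ExteriorAlgebra R M) :
    eulerOperator b x = ∑ r, contractRight x (b.coord r) * ι R (b r) := by
  simp [eulerOperator, LinearMap.sum_apply]

theorem eulerOperator_mul_ι (x : ExteriorAlgebra R M) (v : M) :
    eulerOperator b (x * ι R v) = x * ι R v + eulerOperator b x * ι R v := by
  have hv : ∑ r, b.coord r v • ι R (b r) = ι R v := by
    simp_rw [← map_smul, ← map_sum, Module.Basis.coord_apply, b.sum_repr]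
  have hswap (y : ExteriorAlgebra R M) (r : I) :
      y * ι R v * ι R (b r) = -(y * ι R (b r) * ι R v) := by
    rw [mul_assoc, mul_assoc, ← mul_neg, eq_neg_iff_add_eq_zero.mpr (ι_add_mul_swap v (b r))]
  simp only [eulerOperator_apply, contractRight_mul_ι, sub_mul, Finset.sum_mul, smul_mul_assoc,
    hswap, sub_neg_eq_add, Finset.sum_add_distrib, ← mul_smul_comm, ← Finset.mul_sum, hv]

theorem eulerOperator_of_mem_exteriorPower {n : ℕ} {x : ExteriorAlgebra R M} (hx : x ∈ ⋀[R]^n M) :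
    eulerOperator b x = n • x := by
  induction hx using Submodule.pow_induction_on_right' with
  | algebraMap r => simp [eulerOperator_apply, contractRight_algebraMap]
  | add x y i _ _ hx hy => rw [map_add, hx, hy, smul_add]
  | mul_mem i x _ ih m hm =>
    obtain ⟨v, rfl⟩ := hm
    rw [eulerOperator_mul_ι, ih, smul_mul_assoc, succ_nsmul']

noncomputable def lefschetz : Module.End R (ExteriorAlgebra R M ⊗[R] ExteriorAlgebra R M) :=
  ∑ r, TensorProduct.map (LinearMap.mulRight R (ι R (b r))) (LinearMap.mulRight R (ι R (b r)))

noncomputable def dualLefschetz : Module.End R (ExteriorAlgebra R M ⊗[R] ExteriorAlgebra R M) :=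
  ∑ r, TensorProduct.map ((contractRight (Q := 0)).flip (b.coord r))
    ((contractRight (Q := 0)).flip (b.coord r))

theorem lefschetz_tmul (x y : ExteriorAlgebra R M) :
    lefschetz b (x ⊗ₜ y) = ∑ r, (x * ι R (b r)) ⊗ₜ (y * ι R (b r)) := by
  simp [lefschetz, LinearMap.sum_apply]

theorem dualLefschetz_tmul (x y : ExteriorAlgebra R M) :
    dualLefschetz b (x ⊗ₜ y) =
      ∑ r, contractRight x (b.coord r) ⊗ₜ contractRight y (b.coord r) := by
  simp [dualLefschetz, LinearMap.sum_apply]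

theorem dualLefschetz_lefschetz_tmul (x y : ExteriorAlgebra R M) :
    dualLefschetz b (lefschetz b (x ⊗ₜ y)) = lefschetz b (dualLefschetz b (x ⊗ₜ y))
      + Fintype.card I • (x ⊗ₜ y) - eulerOperator b x ⊗ₜ y - x ⊗ₜ eulerOperator b y := by
  classical
  simp only [lefschetz_tmul, dualLefschetz_tmul, map_sum, contractRight_mul_ι, eulerOperator_apply,
    sub_tmul, tmul_sub, ← smul_tmul', tmul_smul, Finset.sum_sub_distrib, sum_tmul, tmul_sum]
  simp only [Module.Basis.coord_apply, Module.Basis.repr_self, Finsupp.single_apply, ite_smul,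
    one_smul, zero_smul, Finset.sum_ite_eq, Finset.mem_univ, if_true, Finset.sum_sub_distrib,
    Finset.sum_const, Finset.card_univ]
  rw [Finset.sum_comm]
  abel

noncomputable def bigraded (p q : ℕ) :
    Submodule R (ExteriorAlgebra R M ⊗[R] ExteriorAlgebra R M) :=
  Submodule.map₂ (TensorProduct.mk R _ _) (⋀[R]^p M) (⋀[R]^q M)

theorem dualLefschetz_lefschetz_of_mem_bigraded {p q : ℕ} {x}
    (hx : x ∈ bigraded (M := M) p q) :
    dualLefschetz b (lefschetz b x) = lefschetz b (dualLefschetz b x)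
      + Fintype.card I • x - (p + q) • x := by
  suffices bigraded p q ≤ LinearMap.ker (dualLefschetz b * lefschetz b
      - (lefschetz b * dualLefschetz b + Fintype.card I • 1 - (p + q) • 1)) by
    simpa only [LinearMap.mem_ker, LinearMap.sub_apply, LinearMap.add_apply, LinearMap.smul_apply,
      Module.End.mul_apply, Module.End.one_apply, sub_eq_zero] using this hx
  refine Submodule.map₂_le.mpr fun a ha c hc => ?_
  simp only [LinearMap.mem_ker, LinearMap.sub_apply, LinearMap.add_apply, LinearMap.smul_apply,
    Module.End.mul_apply, Module.End.one_apply, mk_apply, dualLefschetz_lefschetz_tmul,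
    eulerOperator_of_mem_exteriorPower b ha, eulerOperator_of_mem_exteriorPower b hc,
    ← smul_tmul', tmul_smul]
  module

theorem dualLefschetz_mem_bigraded {p q : ℕ} {x}
    (hx : x ∈ bigraded (M := M) (p + 1) (q + 1)) :
    dualLefschetz b x ∈ bigraded p q := by
  suffices bigraded (p + 1) (q + 1) ≤ (bigraded p q).comap (dualLefschetz b) from this hx
  refine Submodule.map₂_le.mpr fun a ha c hc => ?_
  rw [Submodule.mem_comap, mk_apply, dualLefschetz_tmul]
  exact Submodule.sum_mem _ fun r _ => Submodule.apply_mem_map₂ _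
    (contractRight_mem_exteriorPower ha _) (contractRight_mem_exteriorPower hc _)

theorem dualLefschetz_eq_zero_of_mem_bigraded_zero_left {q : ℕ} {x}
    (hx : x ∈ bigraded (M := M) 0 q) : dualLefschetz b x = 0 := by
  suffices bigraded 0 q ≤ LinearMap.ker (dualLefschetz b) from this hx
  refine Submodule.map₂_le.mpr fun a ha c hc => ?_
  simp [dualLefschetz_tmul, contractRight_eq_zero_of_mem_exteriorPower_zero ha]

theorem dualLefschetz_eq_zero_of_mem_bigraded_zero_right {p : ℕ} {x}
    (hx : x ∈ bigraded (M := M) p 0) : dualLefschetz b x = 0 := by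
  suffices bigraded p 0 ≤ LinearMap.ker (dualLefschetz b) from this hx
  refine Submodule.map₂_le.mpr fun a ha c hc => ?_
  simp [dualLefschetz_tmul, contractRight_eq_zero_of_mem_exteriorPower_zero hc]

end CommRing

section Field

variable {K M I : Type*} [Field K] [CharZero K] [AddCommGroup M] [Module K M] [Fintype I]
  (b : Module.Basis I K M)

theorem eq_zero_of_dualLefschetz_lefschetz_add_nsmul_eq_zero {p q n : ℕ} {x}
    (hpq : p + q < Fintype.card I) (hx : x ∈ bigraded (M := M) p q)
    (h : dualLefschetz b (lefschetz b x) + n • x = 0) : x = 0 := by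
  obtain ⟨c, hN⟩ := Nat.exists_eq_add_of_lt hpq
  have hLΛ : lefschetz b (dualLefschetz b x) + (n + c + 1) • x = 0 := by
    rw [← h, dualLefschetz_lefschetz_of_mem_bigraded b hx, hN]
    module
  -- `Λ x` satisfies the hypothesis again, with `n + c + 1` for `n`, one bidegree lower.
  suffices dualLefschetz b x = 0 by
    rw [this, map_zero, zero_add, ← Nat.cast_smul_eq_nsmul K] at hLΛ
    exact (smul_eq_zero.mp hLΛ).resolve_left (Nat.cast_ne_zero.mpr (n + c).succ_ne_zero)
  match p, q, hx with
  | 0, _, hx => exact dualLefschetz_eq_zero_of_mem_bigraded_zero_left b hx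
  | _ + 1, 0, hx => exact dualLefschetz_eq_zero_of_mem_bigraded_zero_right b hx
  | p + 1, q + 1, hx =>
    refine eq_zero_of_dualLefschetz_lefschetz_add_nsmul_eq_zero (n := n + c + 1) (by omega)
      (dualLefschetz_mem_bigraded b hx) ?_
    rw [← map_nsmul, ← map_add, hLΛ, map_zero]

theorem lefschetz_injOn {p q : ℕ} (hpq : p + q < Fintype.card I) :
    Set.InjOn (lefschetz b) (bigraded (R := K) (M := M) p q : Set _) := fun x hx y hy hxy =>
  sub_eq_zero.mp <| eq_zero_of_dualLefschetz_lefschetz_add_nsmul_eq_zero b (n := 0) hpq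
    (sub_mem hx hy) (by rw [map_sub, hxy, sub_self, map_zero, zero_smul, add_zero])

theorem injective_of_mapIncl_comp_eq_lefschetz_comp {p q : ℕ} (hpq : p + q < Fintype.card I)
    {f : (⋀[K]^p M) ⊗[K] (⋀[K]^q M) →ₗ[K] (⋀[K]^(p + 1) M) ⊗[K] (⋀[K]^(q + 1) M)}
    (hf : mapIncl _ _ ∘ₗ f = lefschetz b ∘ₗ mapIncl _ _) : Function.Injective f := by
  refine Function.Injective.of_comp (f := mapIncl _ _) ?_
  rw [← LinearMap.coe_comp, hf, LinearMap.coe_comp]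
  refine ((lefschetz_injOn b hpq).injective_iff _ ?_).mpr
    (Module.Flat.tensorProduct_mapIncl_injective_of_right _ _)
  rw [← LinearMap.coe_range, range_mapIncl]
  rfl

end Field
end ExteriorAlgebra

theorem lefschetzPow_injective {N : ℕ}
    {L : ∀ i j : ℕ, extTensor N i j →ₗ[ℝ] extTensor N (i + 1) (j + 1)} {m i j : ℕ}
    (hL : ∀ k < m, Function.Injective (L (i + k) (j + k))) :
    Function.Injective (lefschetzPow N L m i j) := by
  induction m with
  | zero => exact Function.injective_id
  | succ m ih =>
    exact (hL m m.lt_succ_self).comp (ih fun k hk => hL k (hk.trans m.lt_succ_self))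

theorem statement7_general (N : ℕ)
    (L : ∀ i j : ℕ, extTensor N i j →ₗ[ℝ] extTensor N (i + 1) (j + 1))
    (hL : ∀ (i j : ℕ) (v : ⋀[ℝ]^i (Fin N → ℝ)) (w : ⋀[ℝ]^j (Fin N → ℝ)),
      L i j (v ⊗ₜ[ℝ] w)
        = ∑ r : Fin N,
            (wedgeRight N i (Pi.single r 1) v) ⊗ₜ[ℝ] (wedgeRight N j (Pi.single r 1) w))
    (m i j : ℕ) (h : (i : ℤ) + (j : ℤ) ≤ (N : ℤ) - 2 * (m : ℤ)) :
    Function.Injective (lefschetzPow N L m i j) := by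
  have hcomm (p q : ℕ) :
      mapIncl _ _ ∘ₗ L p q = ExteriorAlgebra.lefschetz (Pi.basisFun ℝ (Fin N)) ∘ₗ mapIncl _ _ := by
    refine TensorProduct.ext' fun v w => ?_
    simp [hL, ExteriorAlgebra.lefschetz_tmul, wedgeRight]
  refine lefschetzPow_injective fun k hk =>
    ExteriorAlgebra.injective_of_mapIncl_comp_eq_lefschetz_comp _ ?_ (hcomm _ _)
  rw [Fintype.card_fin]
  omega

/-- Injectivity of the powers of the Lefschetz operator
`L(v ⊗ w) = Σ_r (v ∧ e_r) ⊗ (w ∧ e_r)` on the bigraded piece `(i, j)` whenever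
`i + j ≤ N − 2m`, as used in the proof of Theorem 1.4 of the paper. -/
theorem statement7 (N : ℕ) (hN : 1 ≤ N)
    (L : ∀ i j : ℕ, extTensor N i j →ₗ[ℝ] extTensor N (i + 1) (j + 1))
    (hL : ∀ (i j : ℕ) (v : ⋀[ℝ]^i (Fin N → ℝ)) (w : ⋀[ℝ]^j (Fin N → ℝ)),
      L i j (v ⊗ₜ[ℝ] w)
        = ∑ r : Fin N,
            (wedgeRight N i (Pi.single r 1) v) ⊗ₜ[ℝ] (wedgeRight N j (Pi.single r 1) w))
    (m i j : ℕ) (h : (i : ℤ) + (j : ℤ) ≤ (N : ℤ) - 2 * (m : ℤ)) :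
    Function.Injective (lefschetzPow N L m i j) :=
  statement7_general N L hL m i j h
end
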